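/- arXiv:2310.12079 — 3 statements merged into one kernel-verified Lean document; each statement's English description precedes it below -/
import Mathlib

section
/- Let g and w be independent standard Gaussian random variables, let ρ ∈ [-1,1], q = √(1-ρ²), and ĝ = ρg + qw. Then E[ |g|·|ĝ| ] = (2/π)·( q + ρ·arcsin ρ ). -/
open MeasureTheory ProbabilityTheory Real

open MeasureTheory ProbabilityTheory Real Filter
open scoped NNReal ENNReal

lemma prod_gauss_withDensity :
    (gaussianReal 0 1).prod (gaussianReal 0 1)
      = ((volume : Measure ℝ).prod volume).withDensity
          (fun p => gaussianPDF 0 1 p.1 * gaussianPDF 0 1 p.2) := by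
  refine Measure.prod_eq (fun s t hs ht => ?_)
  rw [withDensity_apply _ (hs.prod ht), ← Measure.prod_restrict,
    lintegral_prod_mul ((measurable_gaussianPDF 0 1).aemeasurable)
      ((measurable_gaussianPDF 0 1).aemeasurable),
    gaussianReal_apply 0 one_ne_zero s, gaussianReal_apply 0 one_ne_zero t]

lemma gauss_integral_eq (F : ℝ × ℝ → ℝ) :
    ∫ p, F p ∂((gaussianReal 0 1).prod (gaussianReal 0 1))
      = ∫ p : ℝ × ℝ, (gaussianPDFReal 0 1 p.1 * gaussianPDFReal 0 1 p.2) * F p := by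
  rw [prod_gauss_withDensity]
  have hd : (fun p : ℝ × ℝ => gaussianPDF 0 1 p.1 * gaussianPDF 0 1 p.2)
      = (fun p : ℝ × ℝ => (((gaussianPDFReal 0 1 p.1).toNNReal
          * (gaussianPDFReal 0 1 p.2).toNNReal : ℝ≥0) : ℝ≥0∞)) := by
    funext p
    simp [gaussianPDF, ENNReal.ofReal, ENNReal.coe_mul]
  rw [hd, integral_withDensity_eq_integral_smul]
  · rw [← Measure.volume_eq_prod]
    congr 1
    funext p
    rw [NNReal.smul_def]
    push_cast
    rw [Real.coe_toNNReal _ (gaussianPDFReal_nonneg 0 1 p.1),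
      Real.coe_toNNReal _ (gaussianPDFReal_nonneg 0 1 p.2), smul_eq_mul]
  · exact (((measurable_gaussianPDFReal 0 1).comp measurable_fst).real_toNNReal).mul
      (((measurable_gaussianPDFReal 0 1).comp measurable_snd).real_toNNReal)

lemma radial : ∫ r in Set.Ioi (0:ℝ), r ^ 3 * Real.exp (-(r ^ 2 / 2)) = 2 := by
  have hderiv : ∀ r ∈ Set.Ioi (0:ℝ),
      HasDerivAt (fun r : ℝ => -((r ^ 2 + 2) * Real.exp (-(r ^ 2 / 2))))
        (r ^ 3 * Real.exp (-(r ^ 2 / 2))) r := by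
    intro r _
    have h1 : HasDerivAt (fun r : ℝ => r ^ 2 + 2) (2 * r) r := by
      simpa using ((hasDerivAt_pow 2 r).add_const 2)
    have h2 : HasDerivAt (fun r : ℝ => -(r ^ 2 / 2)) (-r) r := by
      have := (hasDerivAt_pow 2 r).div_const 2
      simpa using this.fun_neg
    have h3 : HasDerivAt (fun r : ℝ => Real.exp (-(r ^ 2 / 2)))
        (Real.exp (-(r ^ 2 / 2)) * (-r)) r := h2.exp
    have := (h1.fun_mul h3).fun_neg
    refine this.congr_deriv (Eq.symm ?_)
    ring
  have hcont : ContinuousWithinAt (fun r : ℝ => -((r ^ 2 + 2) * Real.exp (-(r ^ 2 / 2))))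
      (Set.Ici 0) 0 := by
    apply Continuous.continuousWithinAt
    continuity
  have htend : Tendsto (fun r : ℝ => -((r ^ 2 + 2) * Real.exp (-(r ^ 2 / 2)))) atTop (nhds 0) := by
    have hu : Tendsto (fun r : ℝ => r ^ 2 / 2) atTop atTop := by
      apply Tendsto.atTop_div_const (by norm_num)
      exact tendsto_pow_atTop (by norm_num)
    have hb : Tendsto (fun u : ℝ => (2 * u + 2) * Real.exp (-u)) atTop (nhds 0) := by
      have h1 : Tendsto (fun u : ℝ => u ^ 1 * Real.exp (-u)) atTop (nhds 0) :=
        Real.tendsto_pow_mul_exp_neg_atTop_nhds_zero 1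
      have h2 : Tendsto (fun u : ℝ => Real.exp (-u)) atTop (nhds 0) :=
        Real.tendsto_exp_neg_atTop_nhds_zero
      have := ((h1.const_mul 2).add (h2.const_mul 2))
      simpa [mul_add, add_mul, pow_one, mul_assoc, mul_comm, mul_left_comm] using this
    have := (hb.comp hu).neg
    simp only [neg_zero] at this
    convert this using 2 with r
    simp [Function.comp]
    ring
  have := integral_Ioi_of_hasDerivAt_of_nonneg hcont hderiv
    (fun r hr => by have : (0:ℝ) < r := hr; positivity) htend
  rw [this]; norm_num

lemma anti (α : ℝ) : ∀ θ : ℝ, HasDerivAt (fun θ : ℝ => Real.sin (2*θ - α)/4 + θ * Real.cos α / 2)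
    (Real.cos θ * Real.cos (θ - α)) θ := by
  intro θ
  have h1 : HasDerivAt (fun θ : ℝ => 2*θ - α) 2 θ := by
    simpa using ((hasDerivAt_id θ).const_mul 2).sub_const α
  have h2 : HasDerivAt (fun θ : ℝ => Real.sin (2*θ - α)) (Real.cos (2*θ - α) * 2) θ := h1.sin
  have h3 := (h2.div_const 4).fun_add (((hasDerivAt_id θ).mul_const (Real.cos α)).div_const 2)
  refine h3.congr_deriv (Eq.symm ?_)
  rw [show 2*θ - α = θ + (θ - α) by ring, Real.cos_add, Real.cos_sub, Real.sin_sub]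
  have pyth := Real.sin_sq_add_cos_sq θ
  linear_combination (Real.cos α / 2) * pyth

lemma angular (α : ℝ) (h0 : 0 ≤ α) (h1 : α ≤ π) :
    ∫ θ in Set.Ioo (-π) π, |Real.cos θ| * |Real.cos (θ - α)|
      = 2 * (Real.sin α + (π/2 - α) * Real.cos α) := by
  have hπ := Real.pi_pos
  set h : ℝ → ℝ := fun θ => |Real.cos θ| * |Real.cos (θ - α)| with hh
  have hcont : Continuous h := by
    apply Continuous.mul
    · exact (Real.continuous_cos).abs
    · exact ((Real.continuous_cos).comp (continuous_id.sub continuous_const)).abs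
  have hper : Function.Periodic h π := by
    intro x
    simp only [hh]
    rw [Real.cos_add_pi, show x + π - α = (x - α) + π by ring, Real.cos_add_pi, abs_neg, abs_neg]
  -- convert set integral to interval integral
  have hIoo : ∫ θ in Set.Ioo (-π) π, h θ = ∫ θ in (-π)..π, h θ := by
    rw [intervalIntegral.integral_of_le (by linarith), ← MeasureTheory.integral_Ioc_eq_integral_Ioo]
  rw [hIoo]
  have hint : ∀ a b : ℝ, IntervalIntegrable h volume a b := fun a b => hcont.intervalIntegrable a b
  -- split [-π, π] into two period intervals
  have hsplit : ∫ θ in (-π)..π, h θ = (∫ θ in (-π)..(0:ℝ), h θ) + ∫ θ in (0:ℝ)..π, h θ :=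
    (intervalIntegral.integral_add_adjacent_intervals (hint _ _) (hint _ _)).symm
  set a : ℝ := α - π/2 with ha
  have e1 : ∫ θ in (-π)..(0:ℝ), h θ = ∫ θ in a..(a + π), h θ := by
    have := hper.intervalIntegral_add_eq (-π) a
    simpa using this
  have e2 : ∫ θ in (0:ℝ)..π, h θ = ∫ θ in a..(a + π), h θ := by
    have := hper.intervalIntegral_add_eq 0 a
    simpa using this
  -- split the period interval at π/2
  have hsplit2 : ∫ θ in a..(a + π), h θ = (∫ θ in a..(π/2), h θ) + ∫ θ in (π/2)..(a + π), h θ :=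
    (intervalIntegral.integral_add_adjacent_intervals (hint _ _) (hint _ _)).symm
  -- first piece: integrand = cos θ * cos (θ - α)
  have hp1 : ∫ θ in a..(π/2), h θ = ∫ θ in a..(π/2), Real.cos θ * Real.cos (θ - α) := by
    apply intervalIntegral.integral_congr
    intro θ hθ
    rw [Set.uIcc_of_le (by rw [ha]; linarith)] at hθ
    obtain ⟨hθ1, hθ2⟩ := hθ
    rw [ha] at hθ1
    have c1 : 0 ≤ Real.cos θ := Real.cos_nonneg_of_mem_Icc ⟨by linarith, hθ2⟩
    have c2 : 0 ≤ Real.cos (θ - α) := Real.cos_nonneg_of_mem_Icc ⟨by linarith, by linarith⟩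
    simp only [hh, abs_of_nonneg c1, abs_of_nonneg c2]
  -- second piece: integrand = -(cos θ * cos (θ - α))
  have hp2 : ∫ θ in (π/2)..(a + π), h θ = ∫ θ in (π/2)..(a + π), -(Real.cos θ * Real.cos (θ - α)) := by
    apply intervalIntegral.integral_congr
    intro θ hθ
    rw [Set.uIcc_of_le (by rw [ha]; linarith)] at hθ
    obtain ⟨hθ1, hθ2⟩ := hθ
    rw [ha] at hθ2
    have c1 : Real.cos θ ≤ 0 := by
      have : Real.cos θ = -Real.cos (θ - π) := by
        rw [show θ - π = θ + (-π) by ring, Real.cos_add]; simp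
      rw [this, neg_nonpos]
      exact Real.cos_nonneg_of_mem_Icc ⟨by linarith, by linarith⟩
    have c2 : 0 ≤ Real.cos (θ - α) := Real.cos_nonneg_of_mem_Icc ⟨by linarith, by linarith⟩
    simp only [hh, abs_of_nonpos c1, abs_of_nonneg c2]
    ring
  -- evaluate via antiderivative
  set F : ℝ → ℝ := fun θ => Real.sin (2*θ - α)/4 + θ * Real.cos α / 2 with hF
  have hc : Continuous fun θ : ℝ => Real.cos θ * Real.cos (θ - α) := by
    exact Real.continuous_cos.mul ((Real.continuous_cos).comp (continuous_id.sub continuous_const))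
  have i1 : ∫ θ in a..(π/2), Real.cos θ * Real.cos (θ - α) = F (π/2) - F a :=
    intervalIntegral.integral_eq_sub_of_hasDerivAt (fun θ _ => anti α θ) (hc.intervalIntegrable _ _)
  have i2 : ∫ θ in (π/2)..(a + π), Real.cos θ * Real.cos (θ - α) = F (a + π) - F (π/2) :=
    intervalIntegral.integral_eq_sub_of_hasDerivAt (fun θ _ => anti α θ) (hc.intervalIntegrable _ _)
  rw [hsplit, e1, e2, hsplit2, hp1, hp2, intervalIntegral.integral_neg, i1, i2]
  simp only [hF, ha]
  have s1 : Real.sin (2*(π/2) - α) = Real.sin α := by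
    rw [show 2*(π/2) - α = π - α by ring, Real.sin_pi_sub]
  have s2 : Real.sin (2*(α - π/2) - α) = -Real.sin α := by
    rw [show 2*(α - π/2) - α = -(π - α) by ring, Real.sin_neg, Real.sin_pi_sub]
  have s3 : Real.sin (2*(α - π/2 + π) - α) = -Real.sin α := by
    rw [show 2*(α - π/2 + π) - α = α + π by ring, Real.sin_add]; simp
  rw [s1, s2, s3]
  ring

/-- For independent standard Gaussians `g, w`, `ρ ∈ [-1,1]`,
`q = √(1-ρ²)` and `ĝ = ρg + qw`, `E[|g||ĝ|] = (2/π)(q + ρ arcsin ρ)`. -/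
theorem gaussian_abs_kernel (ρ : ℝ) (hρ : ρ ∈ Set.Icc (-1 : ℝ) 1) :
    (∫ p : ℝ × ℝ,
        |p.1| * |ρ * p.1 + Real.sqrt (1 - ρ ^ 2) * p.2|
      ∂((gaussianReal 0 1).prod (gaussianReal 0 1)))
    = (2 / π) * (Real.sqrt (1 - ρ ^ 2) + ρ * Real.arcsin ρ) := by
  obtain ⟨hρ1, hρ2⟩ := hρ
  have hπ := Real.pi_pos
  set q : ℝ := Real.sqrt (1 - ρ ^ 2) with hq
  set α : ℝ := Real.arccos ρ with hα
  have hα0 : 0 ≤ α := Real.arccos_nonneg ρ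
  have hα1 : α ≤ π := Real.arccos_le_pi ρ
  have hcosα : Real.cos α = ρ := Real.cos_arccos hρ1 hρ2
  have hsinα : Real.sin α = q := Real.sin_arccos ρ
  rw [gauss_integral_eq]
  rw [← integral_comp_polarCoord_symm
    (fun p : ℝ × ℝ => gaussianPDFReal 0 1 p.1 * gaussianPDFReal 0 1 p.2 *
      (|p.1| * |ρ * p.1 + q * p.2|))]
  have hpdf : ∀ x : ℝ, gaussianPDFReal 0 1 x = (Real.sqrt (2 * π))⁻¹ * Real.exp (-(x ^ 2 / 2)) := by
    intro x
    simp only [gaussianPDFReal, NNReal.coe_one, mul_one, sub_zero]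
    ring_nf
  have hcongr : ∫ p in polarCoord.target,
        p.1 • (fun p : ℝ × ℝ => gaussianPDFReal 0 1 p.1 * gaussianPDFReal 0 1 p.2 *
          (|p.1| * |ρ * p.1 + q * p.2|)) (polarCoord.symm p)
      = ∫ p in (Set.Ioi (0:ℝ)) ×ˢ (Set.Ioo (-π) π),
          ((2 * π)⁻¹ * (p.1 ^ 3 * Real.exp (-(p.1 ^ 2 / 2)))) *
            (|Real.cos p.2| * |Real.cos (p.2 - α)|) := by
    rw [polarCoord_target]
    refine setIntegral_congr_fun (measurableSet_Ioi.prod measurableSet_Ioo) (fun p hp => ?_)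
    obtain ⟨hr, hθ⟩ := hp
    have hr' : (0:ℝ) < p.1 := hr
    simp only [polarCoord_symm_apply]
    rw [hpdf, hpdf]
    have habs1 : |p.1 * Real.cos p.2| = p.1 * |Real.cos p.2| := by
      rw [abs_mul, abs_of_pos hr']
    have habs2 : |ρ * (p.1 * Real.cos p.2) + q * (p.1 * Real.sin p.2)|
        = p.1 * |Real.cos (p.2 - α)| := by
      have : ρ * (p.1 * Real.cos p.2) + q * (p.1 * Real.sin p.2)
          = p.1 * (Real.cos p.2 * Real.cos α + Real.sin p.2 * Real.sin α) := by
        rw [hcosα, hsinα]; ring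
      rw [this, ← Real.cos_sub, abs_mul, abs_of_pos hr']
    rw [habs1, habs2]
    have hexp : Real.exp (-((p.1 * Real.cos p.2) ^ 2 / 2)) *
        Real.exp (-((p.1 * Real.sin p.2) ^ 2 / 2)) = Real.exp (-(p.1 ^ 2 / 2)) := by
      rw [← Real.exp_add]
      congr 1
      have := Real.sin_sq_add_cos_sq p.2
      nlinarith [this]
    have hsq : (Real.sqrt (2 * π))⁻¹ * (Real.sqrt (2 * π))⁻¹ = (2 * π)⁻¹ := by
      rw [← mul_inv, Real.mul_self_sqrt (by positivity)]
    have expand : p.1 • ((Real.sqrt (2 * π))⁻¹ * Real.exp (-((p.1 * Real.cos p.2) ^ 2 / 2)) *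
          ((Real.sqrt (2 * π))⁻¹ * Real.exp (-((p.1 * Real.sin p.2) ^ 2 / 2))) *
          (p.1 * |Real.cos p.2| * (p.1 * |Real.cos (p.2 - α)|)))
        = ((Real.sqrt (2 * π))⁻¹ * (Real.sqrt (2 * π))⁻¹) *
            (Real.exp (-((p.1 * Real.cos p.2) ^ 2 / 2)) * Real.exp (-((p.1 * Real.sin p.2) ^ 2 / 2))) *
            (p.1 ^ 3 * (|Real.cos p.2| * |Real.cos (p.2 - α)|)) := by
      rw [smul_eq_mul]; ring
    rw [expand, hexp, hsq]
    ring
  rw [hcongr]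
  rw [Measure.volume_eq_prod]
  rw [setIntegral_prod_mul (fun r : ℝ => (2 * π)⁻¹ * (r ^ 3 * Real.exp (-(r ^ 2 / 2))))
    (fun θ : ℝ => |Real.cos θ| * |Real.cos (θ - α)|)]
  rw [MeasureTheory.integral_const_mul, radial, angular α hα0 hα1]
  rw [show Real.arcsin ρ = π / 2 - α by rw [hα, Real.arccos]; ring, ← hcosα, ← hsinα]
  field_simp
end

section
/- Let g and w be independent standard Gaussian random variables, let ρ ∈ [-1,1], q = √(1-ρ²), ĝ = ρg + qw, and let s₊, s₋ ∈ ℝ with shaped ReLU φ_s(x) = s₊·max(x,0) + s₋·min(x,0). Then E[ φ_s(g)·φ_s(ĝ) ] = ((s₊ + s₋)²/4)·ρ + ((s₊ − s₋)²/(2π))·( q + ρ·arcsin ρ ). -/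
open MeasureTheory ProbabilityTheory Real

/-!
Write `φ_s(x) = a x + b |x|` with `a = (s₊ + s₋)/2`, `b = (s₊ - s₋)/2`, and put `ρ = cos α`,
`q = sin α` with `α = arccos ρ`, so that `ĝ` is the projection of `(g, w)` on the unit vector at
angle `α`. The integrand is positively homogeneous of degree two, so in polar coordinates the
radial integral `∫ r³ e^{-r²/2} dr = 2` factors out and the expectation is `π⁻¹` times the
integral of `φ_s(cos θ) φ_s(cos (θ - α))` over a period. Expanding the product, the `a²` term gives
`π cos α`, the mixed term vanishes because it changes sign under `θ ↦ θ + π`, and the `b²` term,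
`|cos θ| |cos (θ - α)|`, integrates to `2 sin α + (π - 2α) cos α`. Finally
`π/2 - α = arcsin ρ`.
-/

lemma integral_pow_three_mul_exp_neg_sq_div_two :
    ∫ r in Set.Ioi (0 : ℝ), r ^ 3 * exp (-r ^ 2 / 2) = 2 := by
  have h := integral_rpow_mul_exp_neg_mul_rpow (p := 2) (q := 3) (b := 1 / 2)
    (by norm_num) (by norm_num) (by norm_num)
  norm_num [Gamma_two] at h
  refine (setIntegral_congr_fun measurableSet_Ioi fun r _ => ?_).trans h
  ring_nf

lemma gaussianPDFReal_zero_one_mul (x y : ℝ) :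
    gaussianPDFReal 0 1 x * gaussianPDFReal 0 1 y = (2 * π)⁻¹ * exp (-(x ^ 2 + y ^ 2) / 2) := by
  have hsq : (√(2 * π))⁻¹ * (√(2 * π))⁻¹ = (2 * π)⁻¹ := by
    rw [← mul_inv, mul_self_sqrt (by positivity)]
  simp only [gaussianPDFReal, NNReal.coe_one, mul_one, sub_zero]
  rw [show -(x ^ 2 + y ^ 2) / 2 = -x ^ 2 / 2 + -y ^ 2 / 2 by ring, exp_add, ← hsq]
  ring

lemma integral_gaussianReal_prod_eq_integral_exp_mul (F : ℝ × ℝ → ℝ) :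
    ∫ p, F p ∂((gaussianReal 0 1).prod (gaussianReal 0 1))
      = (2 * π)⁻¹ * ∫ p : ℝ × ℝ, exp (-(p.1 ^ 2 + p.2 ^ 2) / 2) * F p := by
  rw [gaussianReal_of_var_ne_zero 0 one_ne_zero, prod_withDensity (measurable_gaussianPDF 0 1)
    (measurable_gaussianPDF 0 1), ← Measure.volume_eq_prod,
    integral_withDensity_eq_integral_toReal_smul (by fun_prop)
      (Filter.Eventually.of_forall fun p => by simp [gaussianPDF, ENNReal.mul_lt_top]),
    ← integral_const_mul]
  refine integral_congr_ae (Filter.Eventually.of_forall fun p => ?_)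
  simp only [gaussianPDF, smul_eq_mul, ENNReal.toReal_mul,
    ENNReal.toReal_ofReal (gaussianPDFReal_nonneg _ _ _), gaussianPDFReal_zero_one_mul]
  ring

lemma integral_gaussianReal_prod_of_homogeneous (F : ℝ × ℝ → ℝ)
    (hF : ∀ r : ℝ, 0 < r → ∀ p, F (r • p) = r ^ 2 * F p) :
    ∫ p, F p ∂((gaussianReal 0 1).prod (gaussianReal 0 1))
      = π⁻¹ * ∫ θ in -π..π, F (cos θ, sin θ) := by
  have hpolar : ∀ p ∈ polarCoord.target,
      p.1 • (exp (-((polarCoord.symm p).1 ^ 2 + (polarCoord.symm p).2 ^ 2) / 2)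
        * F (polarCoord.symm p)) = (p.1 ^ 3 * exp (-p.1 ^ 2 / 2)) * F (cos p.2, sin p.2) := by
    rintro ⟨r, θ⟩ hr
    have hFr := hF r hr.1 (cos θ, sin θ)
    simp only [Prod.smul_mk, smul_eq_mul] at hFr
    simp only [polarCoord_symm_apply, smul_eq_mul, hFr]
    rw [show (r * cos θ) ^ 2 + (r * sin θ) ^ 2 = r ^ 2 by
      linear_combination r ^ 2 * sin_sq_add_cos_sq θ]
    ring
  rw [integral_gaussianReal_prod_eq_integral_exp_mul, ← integral_comp_polarCoord_symm,
    setIntegral_congr_fun polarCoord.open_target.measurableSet hpolar, polarCoord_target,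
    Measure.volume_eq_prod,
    setIntegral_prod_mul (fun r => r ^ 3 * exp (-r ^ 2 / 2)) (fun θ => F (cos θ, sin θ)),
    integral_pow_three_mul_exp_neg_sq_div_two,
    intervalIntegral.integral_of_le (by linarith [pi_pos]), integral_Ioc_eq_integral_Ioo]
  field_simp

/-- Shifting by `c` negates the integrand but, by `2c`-periodicity, preserves the integral. -/
lemma Function.Antiperiodic.intervalIntegral_add_two_mul_eq_zero {f : ℝ → ℝ} {c : ℝ}
    (hf : Function.Antiperiodic f c) (t : ℝ) : ∫ x in t..t + 2 * c, f x = 0 := by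
  have hshift : ∫ x in t..t + 2 * c, f (x + c) = ∫ x in t..t + 2 * c, f x := by
    rw [intervalIntegral.integral_comp_add_right, add_right_comm,
      hf.periodic_two_mul.intervalIntegral_add_eq]
  simp only [hf _, intervalIntegral.integral_neg] at hshift
  linarith

lemma hasDerivAt_sin_two_mul_sub_div_four_add (α θ : ℝ) :
    HasDerivAt (fun t => sin (2 * t - α) / 4 + t * cos α / 2) (cos θ * cos (θ - α)) θ := by
  have h := ((((hasDerivAt_id θ).const_mul 2).sub_const α).sin.div_const 4).add
    ((hasDerivAt_id θ).mul_const (cos α) |>.div_const 2)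
  have hcos_two_mul : cos (2 * θ - α) = cos θ * cos (θ - α) - sin θ * sin (θ - α) := by
    rw [show 2 * θ - α = θ + (θ - α) by ring, cos_add]
  have hcos : cos α = cos θ * cos (θ - α) + sin θ * sin (θ - α) := by
    rw [← cos_sub, sub_sub_cancel]
  have hderiv : cos (2 * θ - α) * (2 * 1) / 4 + 1 * cos α / 2 = cos θ * cos (θ - α) := by
    rw [hcos_two_mul, hcos]
    ring
  simpa only [id, hderiv, Pi.add_def] using h

lemma integral_cos_mul_cos_sub (α a b : ℝ) :
    ∫ θ in a..b, cos θ * cos (θ - α)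
      = (sin (2 * b - α) / 4 + b * cos α / 2) - (sin (2 * a - α) / 4 + a * cos α / 2) :=
  intervalIntegral.integral_eq_sub_of_hasDerivAt
    (fun θ _ => hasDerivAt_sin_two_mul_sub_div_four_add α θ)
    ((by fun_prop : Continuous fun θ => cos θ * cos (θ - α)).intervalIntegrable _ _)

lemma integral_neg_pi_pi_cos_mul_cos_sub (α : ℝ) :
    ∫ θ in -π..π, cos θ * cos (θ - α) = π * cos α := by
  rw [integral_cos_mul_cos_sub, show 2 * π - α = -α + 2 * π by ring,
    show 2 * -π - α = -α - 2 * π by ring, sin_add_two_pi, sin_sub_two_pi]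
  ring

lemma integral_neg_pi_pi_cos_mul_abs_cos_sub_add (α : ℝ) :
    ∫ θ in -π..π, (cos θ * |cos (θ - α)| + |cos θ| * cos (θ - α)) = 0 := by
  have hanti : Function.Antiperiodic
      (fun θ => cos θ * |cos (θ - α)| + |cos θ| * cos (θ - α)) π := by
    intro θ
    simp only [add_sub_right_comm θ π α, cos_add_pi, abs_neg]
    ring
  simpa [show -π + 2 * π = π by ring] using hanti.intervalIntegral_add_two_mul_eq_zero (-π)

/-- The integrand has period `π`; on the period `[α - π/2, α + π/2]` the factor `cos (θ - α)` is
nonnegative and `cos θ` changes sign only at `π/2`. -/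
lemma integral_neg_pi_pi_abs_cos_mul_abs_cos_sub {α : ℝ} (h₀ : 0 ≤ α) (hπ : α ≤ π) :
    ∫ θ in -π..π, |cos θ| * |cos (θ - α)| = 2 * sin α + (π - 2 * α) * cos α := by
  set g := fun θ => |cos θ| * |cos (θ - α)|
  have hper : Function.Periodic g π := by
    intro θ
    simp only [g, add_sub_right_comm θ π α, cos_add_pi, abs_neg]
  have hint : ∀ a b, IntervalIntegrable g volume a b := fun a b =>
    (by fun_prop : Continuous g).intervalIntegrable a b
  have htwo : ∫ θ in -π..π, g θ = 2 * ∫ θ in (α - π / 2)..(α - π / 2) + π, g θ := by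
    have h := hper.intervalIntegral_add_zsmul_eq 2 (-π) hint
    rw [show -π + (2 : ℤ) • π = π by simp; ring,
      hper.intervalIntegral_add_eq (-π) (α - π / 2)] at h
    simpa using h
  have hpos : ∫ θ in (α - π / 2)..(π / 2), g θ
      = ∫ θ in (α - π / 2)..(π / 2), cos θ * cos (θ - α) := by
    refine intervalIntegral.integral_congr fun θ hθ => ?_
    rw [Set.uIcc_of_le (by linarith)] at hθ
    have h₁ : 0 ≤ cos θ := cos_nonneg_of_mem_Icc ⟨by linarith [hθ.1], hθ.2⟩
    have h₂ : 0 ≤ cos (θ - α) :=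
      cos_nonneg_of_mem_Icc ⟨by linarith [hθ.1], by linarith [hθ.2]⟩
    simp only [g, abs_of_nonneg h₁, abs_of_nonneg h₂]
  have hneg : ∫ θ in (π / 2)..(α - π / 2) + π, g θ
      = -∫ θ in (π / 2)..(α - π / 2) + π, cos θ * cos (θ - α) := by
    rw [← intervalIntegral.integral_neg]
    refine intervalIntegral.integral_congr fun θ hθ => ?_
    rw [Set.uIcc_of_le (by linarith)] at hθ
    have h₁ : cos θ ≤ 0 := cos_nonpos_of_pi_div_two_le_of_le hθ.1 (by linarith [hθ.2])
    have h₂ : 0 ≤ cos (θ - α) :=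
      cos_nonneg_of_mem_Icc ⟨by linarith [hθ.1], by linarith [hθ.2]⟩
    simp only [g, abs_of_nonpos h₁, abs_of_nonneg h₂]
    ring
  rw [htwo, ← intervalIntegral.integral_add_adjacent_intervals (hint _ (π / 2)) (hint _ _),
    hpos, hneg, integral_cos_mul_cos_sub, integral_cos_mul_cos_sub,
    show 2 * (π / 2) - α = π - α by ring, show 2 * (α - π / 2) - α = α - π by ring,
    show 2 * (α - π / 2 + π) - α = α + π by ring, sin_pi_sub, sin_sub_pi, sin_add_pi]
  ring

def shapedRelu (sp sm x : ℝ) : ℝ := sp * max x 0 + sm * min x 0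

lemma shapedRelu_eq (sp sm x : ℝ) :
    shapedRelu sp sm x = (sp + sm) / 2 * x + (sp - sm) / 2 * |x| := by
  rcases le_total 0 x with hx | hx
  · simp only [shapedRelu, max_eq_left hx, min_eq_right hx, abs_of_nonneg hx]
    ring
  · simp only [shapedRelu, max_eq_right hx, min_eq_left hx, abs_of_nonpos hx]
    ring

lemma shapedRelu_mul_of_nonneg (sp sm : ℝ) {r : ℝ} (hr : 0 ≤ r) (x : ℝ) :
    shapedRelu sp sm (r * x) = r * shapedRelu sp sm x := by
  simp only [shapedRelu_eq, abs_mul, abs_of_nonneg hr]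
  ring

lemma integral_shapedRelu_cos_mul_shapedRelu_cos_sub (sp sm : ℝ) {α : ℝ} (h₀ : 0 ≤ α)
    (hπ : α ≤ π) :
    ∫ θ in -π..π, shapedRelu sp sm (cos θ) * shapedRelu sp sm (cos (θ - α))
      = ((sp + sm) / 2) ^ 2 * (π * cos α)
        + ((sp - sm) / 2) ^ 2 * (2 * sin α + (π - 2 * α) * cos α) := by
  have hexpand : ∀ θ, shapedRelu sp sm (cos θ) * shapedRelu sp sm (cos (θ - α))
      = ((sp + sm) / 2) ^ 2 * (cos θ * cos (θ - α))
        + (sp + sm) / 2 * ((sp - sm) / 2) * (cos θ * |cos (θ - α)| + |cos θ| * cos (θ - α))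
        + ((sp - sm) / 2) ^ 2 * (|cos θ| * |cos (θ - α)|) := fun θ => by
    rw [shapedRelu_eq, shapedRelu_eq]
    ring
  simp only [hexpand]
  rw [intervalIntegral.integral_add, intervalIntegral.integral_add,
    intervalIntegral.integral_const_mul, intervalIntegral.integral_const_mul,
    intervalIntegral.integral_const_mul, integral_neg_pi_pi_cos_mul_cos_sub,
    integral_neg_pi_pi_cos_mul_abs_cos_sub_add, integral_neg_pi_pi_abs_cos_mul_abs_cos_sub h₀ hπ]
  · ring
  all_goals exact Continuous.intervalIntegrable (by fun_prop) _ _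

/-- For independent standard Gaussians `g, w`, `ρ ∈ [-1,1]`,
`q = √(1-ρ²)`, `ĝ = ρg + qw`, and the shaped ReLU
`φ_s(x) = s₊ max(x,0) + s₋ min(x,0)` (here `sp = s₊`, `sm = s₋`),
`E[φ_s(g)φ_s(ĝ)] = ((s₊+s₋)²/4) ρ + ((s₊−s₋)²/(2π))(q + ρ arcsin ρ)`. -/
theorem shaped_relu_kernel (ρ sp sm : ℝ) (hρ : ρ ∈ Set.Icc (-1 : ℝ) 1) :
    (∫ p : ℝ × ℝ,
        (sp * max p.1 0 + sm * min p.1 0) *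
          (sp * max (ρ * p.1 + Real.sqrt (1 - ρ ^ 2) * p.2) 0 +
            sm * min (ρ * p.1 + Real.sqrt (1 - ρ ^ 2) * p.2) 0)
      ∂((gaussianReal 0 1).prod (gaussianReal 0 1)))
    = ((sp + sm) ^ 2 / 4) * ρ +
        ((sp - sm) ^ 2 / (2 * π)) * (Real.sqrt (1 - ρ ^ 2) + ρ * Real.arcsin ρ) := by
  set q := √(1 - ρ ^ 2)
  have hcos : cos (arccos ρ) = ρ := cos_arccos hρ.1 hρ.2
  have hrot : ∀ θ, ρ * cos θ + q * sin θ = cos (θ - arccos ρ) := fun θ => by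
    rw [cos_sub, hcos, sin_arccos]
    ring
  change ∫ p : ℝ × ℝ, shapedRelu sp sm p.1 * shapedRelu sp sm (ρ * p.1 + q * p.2) ∂_ = _
  rw [integral_gaussianReal_prod_of_homogeneous]
  · simp only [hrot, integral_shapedRelu_cos_mul_shapedRelu_cos_sub sp sm (arccos_nonneg ρ)
      (arccos_le_pi ρ), hcos, sin_arccos, arcsin_eq_pi_div_two_sub_arccos]
    field_simp
    ring
  · intro r hr p
    simp only [Prod.smul_fst, Prod.smul_snd, smul_eq_mul]
    rw [show ρ * (r * p.1) + q * (r * p.2) = r * (ρ * p.1 + q * p.2) by ring,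
      shapedRelu_mul_of_nonneg _ _ hr.le, shapedRelu_mul_of_nonneg _ _ hr.le]
    ring
end

section
/- Let ρ₀ ∈ [-1,1] and define the sequence ρ_{ℓ+1} = ρ_ℓ + (1/π)·( √(1-ρ_ℓ²) − ρ_ℓ·arccos ρ_ℓ ) for ℓ ≥ 0. Then ρ_ℓ ∈ [-1,1] for all ℓ, the sequence (ρ_ℓ) is nondecreasing, and lim_{ℓ→∞} ρ_ℓ = 1. -/
/-!
Put `θ = arccos ρ` and `g θ = sin θ - θ cos θ`, which increases strictly on `[0, π]` from
`g 0 = 0` to `g π = π` because `g' θ = θ sin θ`. The increment of the recursion is `g θ / π ≥ 0`,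
while the new correlation itself is `g (π - θ) / π ≤ 1`. So the sequence increases inside
`[-1, 1]`, converges, and its limit is a fixed point, i.e. a zero of `g ∘ arccos`, which is `1`.
-/

open Real Filter Set Topology

theorem tendsto_of_monotone_of_unique_fixedPt {f : ℝ → ℝ} {u : ℕ → ℝ} {s : Set ℝ} {b : ℝ}
    (hu : ∀ n, u (n + 1) = f (u n)) (hmono : Monotone u) (hs : IsClosed s) (hbdd : BddAbove s)
    (hus : ∀ n, u n ∈ s) (hf : ContinuousOn f s) (hfix : ∀ x ∈ s, f x = x → x = b) :
    Tendsto u atTop (𝓝 b) := by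
  have hrange : BddAbove (range u) := hbdd.mono (range_subset_iff.2 hus)
  have hlim : Tendsto u atTop (𝓝 (⨆ n, u n)) := tendsto_atTop_ciSup hmono hrange
  have hmem : (⨆ n, u n) ∈ s := hs.mem_of_tendsto hlim (Eventually.of_forall hus)
  have hlim_within : Tendsto u atTop (𝓝[s] (⨆ n, u n)) :=
    tendsto_nhdsWithin_iff.2 ⟨hlim, Eventually.of_forall hus⟩
  have hlim_succ : Tendsto (fun n => u (n + 1)) atTop (𝓝 (f (⨆ n, u n))) := by
    simp only [hu]
    exact (hf _ hmem).tendsto.comp hlim_within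
  have hfixed : f (⨆ n, u n) = ⨆ n, u n :=
    tendsto_nhds_unique hlim_succ (hlim.comp (tendsto_add_atTop_nat 1))
  rwa [← hfix _ hmem hfixed]

noncomputable def sinSubMulCos (θ : ℝ) : ℝ := sin θ - θ * cos θ

theorem hasDerivAt_sinSubMulCos (θ : ℝ) : HasDerivAt sinSubMulCos (θ * sin θ) θ :=
  ((hasDerivAt_sin θ).sub ((hasDerivAt_id' θ).mul (hasDerivAt_cos θ))).congr_deriv (by ring)

theorem strictMonoOn_sinSubMulCos : StrictMonoOn sinSubMulCos (Icc 0 π) := by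
  refine strictMonoOn_of_deriv_pos (convex_Icc 0 π)
    (fun θ _ => (hasDerivAt_sinSubMulCos θ).continuousAt.continuousWithinAt) fun θ hθ => ?_
  rw [interior_Icc] at hθ
  rw [(hasDerivAt_sinSubMulCos θ).deriv]
  exact mul_pos hθ.1 (sin_pos_of_pos_of_lt_pi hθ.1 hθ.2)

@[simp] theorem sinSubMulCos_zero : sinSubMulCos 0 = 0 := by simp [sinSubMulCos]

@[simp] theorem sinSubMulCos_pi : sinSubMulCos π = π := by simp [sinSubMulCos]

theorem sinSubMulCos_arccos {ρ : ℝ} (hρ : ρ ∈ Icc (-1) 1) :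
    sinSubMulCos (arccos ρ) = √(1 - ρ ^ 2) - ρ * arccos ρ := by
  rw [sinSubMulCos, sin_arccos, cos_arccos hρ.1 hρ.2, mul_comm]

noncomputable def corrMap (ρ : ℝ) : ℝ := ρ + (1 / π) * (√(1 - ρ ^ 2) - ρ * arccos ρ)

theorem continuous_corrMap : Continuous corrMap := by
  unfold corrMap
  fun_prop

theorem corrMap_sub_self {ρ : ℝ} (hρ : ρ ∈ Icc (-1) 1) :
    corrMap ρ - ρ = sinSubMulCos (arccos ρ) / π := by
  rw [sinSubMulCos_arccos hρ, corrMap]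
  ring

/-- In Cho–Saul form `corrMap ρ = J₁ (arccos ρ) / π` with `J₁ θ = sin θ + (π - θ) cos θ`,
and `J₁ θ = sinSubMulCos (π - θ)`. -/
theorem corrMap_eq {ρ : ℝ} (hρ : ρ ∈ Icc (-1) 1) :
    corrMap ρ = sinSubMulCos (arccos (-ρ)) / π := by
  have hneg : -ρ ∈ Icc (-1) 1 := ⟨by linarith [hρ.2], by linarith [hρ.1]⟩
  rw [sinSubMulCos_arccos hneg, arccos_neg, corrMap]
  field_simp
  ring

theorem self_le_corrMap {ρ : ℝ} (hρ : ρ ∈ Icc (-1) 1) : ρ ≤ corrMap ρ := by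
  have hg : 0 ≤ sinSubMulCos (arccos ρ) := by
    simpa using strictMonoOn_sinSubMulCos.monotoneOn (left_mem_Icc.2 pi_pos.le)
      ⟨arccos_nonneg ρ, arccos_le_pi ρ⟩ (arccos_nonneg ρ)
  rw [← sub_nonneg, corrMap_sub_self hρ]
  exact div_nonneg hg pi_pos.le

theorem corrMap_le_one {ρ : ℝ} (hρ : ρ ∈ Icc (-1) 1) : corrMap ρ ≤ 1 := by
  have hg : sinSubMulCos (arccos (-ρ)) ≤ π := by
    simpa using strictMonoOn_sinSubMulCos.monotoneOn ⟨arccos_nonneg (-ρ), arccos_le_pi (-ρ)⟩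
      (right_mem_Icc.2 pi_pos.le) (arccos_le_pi (-ρ))
  rw [corrMap_eq hρ, div_le_one pi_pos]
  exact hg

theorem mapsTo_corrMap : MapsTo corrMap (Icc (-1) 1) (Icc (-1) 1) := fun _ hρ =>
  ⟨hρ.1.trans (self_le_corrMap hρ), corrMap_le_one hρ⟩

theorem corrMap_eq_self_iff {ρ : ℝ} (hρ : ρ ∈ Icc (-1) 1) : corrMap ρ = ρ ↔ ρ = 1 := by
  have harccos : arccos ρ ∈ Icc 0 π := ⟨arccos_nonneg ρ, arccos_le_pi ρ⟩
  rw [← sub_eq_zero, corrMap_sub_self hρ, div_eq_zero_iff, or_iff_left pi_ne_zero,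
    ← sinSubMulCos_zero, strictMonoOn_sinSubMulCos.injOn.eq_iff harccos
      (left_mem_Icc.2 pi_pos.le), arccos_eq_zero]
  exact ⟨fun h => le_antisymm hρ.2 h, ge_of_eq⟩

/-- for `ρ₀ ∈ [-1,1]` and the recursion
`ρ_{ℓ+1} = ρ_ℓ + (1/π)(√(1-ρ_ℓ²) − ρ_ℓ arccos ρ_ℓ)`, the sequence stays in
`[-1,1]`, is nondecreasing, and converges to `1`. -/
theorem corr_recursion_converges_to_one (ρ₀ : ℝ) (hρ₀ : ρ₀ ∈ Set.Icc (-1 : ℝ) 1)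
    (ρs : ℕ → ℝ) (h0 : ρs 0 = ρ₀)
    (hrec : ∀ ℓ : ℕ, ρs (ℓ + 1)
      = ρs ℓ + (1 / π) * (Real.sqrt (1 - ρs ℓ ^ 2) - ρs ℓ * Real.arccos (ρs ℓ))) :
    (∀ ℓ : ℕ, ρs ℓ ∈ Set.Icc (-1 : ℝ) 1) ∧
    Monotone ρs ∧
    Tendsto ρs atTop (nhds 1) := by
  have hstep : ∀ ℓ, ρs (ℓ + 1) = corrMap (ρs ℓ) := hrec
  have hmem : ∀ ℓ, ρs ℓ ∈ Icc (-1) 1 := by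
    intro ℓ
    induction ℓ with
    | zero => exact h0 ▸ hρ₀
    | succ ℓ ih => exact (hstep ℓ).symm ▸ mapsTo_corrMap ih
  have hmono : Monotone ρs :=
    monotone_nat_of_le_succ fun ℓ => (hstep ℓ).symm ▸ self_le_corrMap (hmem ℓ)
  exact ⟨hmem, hmono, tendsto_of_monotone_of_unique_fixedPt hstep hmono isClosed_Icc
    bddAbove_Icc hmem continuous_corrMap.continuousOn fun _ hρ => (corrMap_eq_self_iff hρ).1⟩
end
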